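/- Let σ be a full-rank density matrix, Π a positive semidefinite operator with Π ≤ 1 (i.e., 1 − Π positive semidefinite), and β > 0. Then the minimum value of Tr(Πρ) + β·S(ρ‖σ) over density matrices ρ equals −β · log Tr(exp(log σ − Π/β)), and this value is at most Tr(Πσ). -/

import Mathlib

open Matrix ComplexOrder Kronecker
noncomputable section
variable {m n : Type*} [Fintype n] [DecidableEq n] [Fintype m] [DecidableEq m]

/-- Functional calculus for Hermitian matrices via the spectral theorem
(junk value `0` on non-Hermitian input). -/
def matFun (f : ℝ → ℝ) (A : Matrix n n ℂ) : Matrix n n ℂ :=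
  if hA : A.IsHermitian then
    (hA.eigenvectorUnitary : Matrix n n ℂ) *
      Matrix.diagonal (fun i => (f (hA.eigenvalues i) : ℂ)) *
      (star hA.eigenvectorUnitary : Matrix n n ℂ)
  else 0

/-- Matrix logarithm on the support (`Real.log 0 = 0` gives the `0 log 0 = 0` convention). -/
def matLog (A : Matrix n n ℂ) : Matrix n n ℂ := matFun Real.log A

/-- Matrix exponential (of a Hermitian matrix). -/
def matExp (A : Matrix n n ℂ) : Matrix n n ℂ := matFun Real.exp A

/-- A density matrix: positive semidefinite with trace one. -/
def IsDensity (ρ : Matrix n n ℂ) : Prop := ρ.PosSemidef ∧ ρ.trace = 1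

/-- Quantum relative entropy `S(ρ‖σ) = Tr (ρ (log ρ − log σ))`. -/
def qRelEnt (ρ σ : Matrix n n ℂ) : ℂ := (ρ * (matLog ρ - matLog σ)).trace

/-- `k`-fold tensor power of a matrix. -/
def tpow (ρ : Matrix n n ℂ) (k : ℕ) : Matrix (Fin k → n) (Fin k → n) ℂ :=
  Matrix.of fun i j => ∏ t, ρ (i t) (j t)

/-- Trace norm: the sum of singular values. -/
def traceNorm (A : Matrix n n ℂ) : ℝ :=
  ∑ i, Real.sqrt ((Matrix.posSemidef_conjTranspose_mul_self A).1.eigenvalues i)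

/-- Projection onto the strictly positive eigenspace of a Hermitian matrix. -/
def posProj (A : Matrix n n ℂ) : Matrix n n ℂ := matFun (fun x => if 0 < x then 1 else 0) A

/-- Positive part in the Jordan decomposition of a Hermitian matrix. -/
def posPart (A : Matrix n n ℂ) : Matrix n n ℂ := matFun (fun x => max x 0) A

/-- Projection onto the support of a Hermitian (e.g. PSD) matrix. -/
def suppProj (A : Matrix n n ℂ) : Matrix n n ℂ := matFun (fun x => if x = 0 then 0 else 1) A

/-!
Put `H = log σ - Π/β` and let `γ = exp H / Tr exp H` be its Gibbs state, so that
`log γ = H - log Tr exp H`. For every density matrix `ρ` this gives the identity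
`Tr(Πρ) + β S(ρ‖σ) = β S(ρ‖γ) - β log Tr exp H`, and Klein's inequality `S(ρ‖γ) ≥ 0`, with
equality at `ρ = γ`, shows that the right-hand constant is the minimum; taking `ρ = σ` gives the
bound `Tr(Πσ)`.

Klein's inequality is reduced to a classical one: in eigenbases `(uᵢ)` of `ρ` and `(vⱼ)` of `τ`,
`S(ρ‖τ) = ∑ᵢ aᵢ log aᵢ - ∑ᵢⱼ pᵢⱼ aᵢ log bⱼ` with `pᵢⱼ = |⟪uᵢ, vⱼ⟫|²` doubly stochastic, and
summing `a log a - a log b ≥ a - b` against `p` leaves `∑ aᵢ - ∑ bⱼ = 0`.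
-/

open scoped MatrixOrder

lemma matFun_eq_cfc (f : ℝ → ℝ) {A : Matrix n n ℂ} (hA : A.IsHermitian) :
    matFun f A = cfc f A := by
  rw [matFun, dif_pos hA, hA.cfc_eq, IsHermitian.cfc, Unitary.conjStarAlgAut_apply]
  rfl

lemma isHermitian_matFun (f : ℝ → ℝ) (A : Matrix n n ℂ) : (matFun f A).IsHermitian := by
  by_cases hA : A.IsHermitian
  · rw [matFun_eq_cfc f hA]
    exact cfc_predicate f A
  · rw [matFun, dif_neg hA]
    exact isHermitian_zero

lemma trace_cfc (f : ℝ → ℝ) {A : Matrix n n ℂ} (hA : A.IsHermitian) :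
    (cfc f A).trace = ((∑ i, f (hA.eigenvalues i) : ℝ) : ℂ) := by
  rw [hA.cfc_eq, IsHermitian.cfc, Unitary.conjStarAlgAut_apply, trace_mul_cycle,
    Unitary.coe_star_mul_self, one_mul, trace_diagonal, Complex.ofReal_sum]
  rfl

lemma trace_cfc_mul_cfc (f g : ℝ → ℝ) {A B : Matrix n n ℂ} (hA : A.IsHermitian)
    (hB : B.IsHermitian) :
    (cfc f A * cfc g B).trace = ∑ i, ∑ j, (f (hA.eigenvalues i) * g (hB.eigenvalues j) *
      Complex.normSq ((star (hA.eigenvectorUnitary : Matrix n n ℂ) * hB.eigenvectorUnitary) i j)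
        : ℝ) := by
  set U := (hA.eigenvectorUnitary : Matrix n n ℂ)
  set V := (hB.eigenvectorUnitary : Matrix n n ℂ)
  set W := star U * V
  rw [hA.cfc_eq, hB.cfc_eq, IsHermitian.cfc, IsHermitian.cfc, Unitary.conjStarAlgAut_apply,
    Unitary.conjStarAlgAut_apply]
  have hcycle : (U * diagonal (RCLike.ofReal ∘ f ∘ hA.eigenvalues) * star U *
      (V * diagonal (RCLike.ofReal ∘ g ∘ hB.eigenvalues) * star V)).trace =
      (diagonal (RCLike.ofReal ∘ f ∘ hA.eigenvalues) * W *
        diagonal (RCLike.ofReal ∘ g ∘ hB.eigenvalues) * star W).trace := by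
    simp only [W, star_mul, star_star, Matrix.mul_assoc]
    rw [trace_mul_comm]
    simp only [Matrix.mul_assoc]
  rw [hcycle, trace]
  push_cast
  refine Finset.sum_congr rfl fun i _ => ?_
  rw [diag_apply, mul_apply]
  refine Finset.sum_congr rfl fun j _ => ?_
  rw [mul_diagonal, diagonal_mul, star_apply, RCLike.star_def, ← Complex.mul_conj]
  change (f _ : ℂ) * _ * (g _ : ℂ) * _ = _
  ring

lemma posDef_cfc {f : ℝ → ℝ} (hf : ∀ x, 0 < f x) {A : Matrix n n ℂ} (hA : A.IsHermitian) :
    (cfc f A).PosDef :=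
  ((cfc_isStrictlyPositive_iff f A (finite_real_spectrum.continuousOn _) hA.isSelfAdjoint).mpr
    fun x _ => hf x).posDef

lemma normSq_mem_doublyStochastic {W : Matrix n n ℂ} (hW : W ∈ unitaryGroup n ℂ) :
    (of fun i j => Complex.normSq (W i j)) ∈ doublyStochastic ℝ n := by
  have row_sum : ∀ V : Matrix n n ℂ, V * star V = 1 → ∀ i, ∑ j, Complex.normSq (V i j) = 1 := by
    intro V hV i
    have := congr_fun₂ hV i i
    simp only [mul_apply, star_apply, one_apply_eq, RCLike.star_def, Complex.mul_conj] at this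
    exact_mod_cast this
  refine mem_doublyStochastic_iff_sum.mpr ⟨fun i j => Complex.normSq_nonneg _,
    row_sum W hW.2, fun j => ?_⟩
  simpa [Complex.normSq_conj] using row_sum (star W) (by simpa using hW.1) j

lemma sub_le_mul_log_sub_mul_log {a b : ℝ} (ha : 0 ≤ a) (hb : 0 < b) :
    a - b ≤ a * Real.log a - a * Real.log b := by
  rcases ha.eq_or_lt with rfl | ha
  · simpa using hb.le
  have h := mul_le_mul_of_nonneg_left (Real.log_le_sub_one_of_pos (div_pos hb ha)) ha.le
  rw [Real.log_div hb.ne' ha.ne', mul_sub, mul_sub, mul_div_cancel₀ _ ha.ne', mul_one] at h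
  linarith

lemma sum_mul_log_mul_le_of_mem_doublyStochastic {a b : n → ℝ} {P : Matrix n n ℝ}
    (hP : P ∈ doublyStochastic ℝ n) (ha : ∀ i, 0 ≤ a i) (hb : ∀ j, 0 < b j)
    (hab : ∑ j, b j ≤ ∑ i, a i) :
    ∑ i, ∑ j, a i * Real.log (b j) * P i j ≤ ∑ i, a i * Real.log (a i) := by
  obtain ⟨hP0, hrow, hcol⟩ := mem_doublyStochastic_iff_sum.mp hP
  have hmass : ∑ i, ∑ j, (a i - b j) * P i j = ∑ i, a i - ∑ j, b j := by
    simp_rw [sub_mul, Finset.sum_sub_distrib, ← Finset.mul_sum, hrow, mul_one]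
    rw [Finset.sum_comm]
    simp_rw [← Finset.mul_sum, hcol, mul_one]
  have hent : ∑ i, a i * Real.log (a i) = ∑ i, ∑ j, a i * Real.log (a i) * P i j := by
    simp_rw [← Finset.mul_sum, hrow, mul_one]
  rw [← sub_nonneg, hent, ← Finset.sum_sub_distrib]
  calc (0 : ℝ) ≤ ∑ i, ∑ j, (a i - b j) * P i j := by rw [hmass]; linarith
    _ ≤ _ := by
      refine Finset.sum_le_sum fun i _ => ?_
      rw [← Finset.sum_sub_distrib]
      refine Finset.sum_le_sum fun j _ => ?_
      rw [← sub_mul]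
      exact mul_le_mul_of_nonneg_right (sub_le_mul_log_sub_mul_log (ha i) (hb j)) (hP0 i j)

lemma qRelEnt_self (ρ : Matrix n n ℂ) : qRelEnt ρ ρ = 0 := by
  rw [qRelEnt, sub_self, Matrix.mul_zero, trace_zero]

lemma qRelEnt_sub_qRelEnt (ρ σ τ : Matrix n n ℂ) :
    qRelEnt ρ τ - qRelEnt ρ σ = (ρ * (matLog σ - matLog τ)).trace := by
  rw [qRelEnt, qRelEnt, ← trace_sub, ← Matrix.mul_sub, sub_sub_sub_cancel_left]

theorem qRelEnt_nonneg {ρ τ : Matrix n n ℂ} (hρ : IsDensity ρ) (hτ : IsDensity τ)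
    (hτpd : τ.PosDef) : 0 ≤ qRelEnt ρ τ := by
  have hρh := hρ.1.isHermitian
  have hτh := hτ.1.isHermitian
  have hent : (ρ * matLog ρ).trace =
      ∑ i, (hρh.eigenvalues i * Real.log (hρh.eigenvalues i) : ℝ) := by
    have : ρ * cfc Real.log ρ = cfc (fun x => x * Real.log x) ρ := by
      rw [cfc_mul _ _ _ (finite_real_spectrum.continuousOn _) (finite_real_spectrum.continuousOn _),
        cfc_id' ..]
    rw [matLog, matFun_eq_cfc _ hρh, this, trace_cfc _ hρh]
  have hcross : (ρ * matLog τ).trace =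
      ∑ i, ∑ j, (hρh.eigenvalues i * Real.log (hτh.eigenvalues j) *
        Complex.normSq ((star (hρh.eigenvectorUnitary : Matrix n n ℂ) *
          hτh.eigenvectorUnitary) i j) : ℝ) := by
    conv_lhs => rw [← cfc_id' ℝ ρ]
    rw [matLog, matFun_eq_cfc _ hτh, trace_cfc_mul_cfc _ _ hρh hτh]
  have htrace : ∑ j, hτh.eigenvalues j ≤ ∑ i, hρh.eigenvalues i := by
    have := hτh.trace_eq_sum_eigenvalues.symm.trans
      (hτ.2.trans (hρ.2.symm.trans hρh.trace_eq_sum_eigenvalues))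
    exact_mod_cast this.le
  rw [qRelEnt, Matrix.mul_sub, trace_sub, hent, hcross, ← Complex.ofReal_sub]
  exact Complex.zero_le_real.mpr <| sub_nonneg.mpr <| sum_mul_log_mul_le_of_mem_doublyStochastic
    (normSq_mem_doublyStochastic ((hρh.eigenvectorUnitary)⁻¹ * hτh.eigenvectorUnitary).2)
    hρ.1.eigenvalues_nonneg hτpd.eigenvalues_pos htrace

def partitionFn (H : Matrix n n ℂ) : ℝ := (matExp H).trace.re

def gibbsState (H : Matrix n n ℂ) : Matrix n n ℂ := (partitionFn H)⁻¹ • matExp H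

section GibbsState

variable {H : Matrix n n ℂ}

lemma partitionFn_eq_sum (hH : H.IsHermitian) :
    partitionFn H = ∑ i, Real.exp (hH.eigenvalues i) := by
  rw [partitionFn, matExp, matFun_eq_cfc _ hH, trace_cfc _ hH, Complex.ofReal_re]

lemma partitionFn_pos [Nonempty n] (hH : H.IsHermitian) : 0 < partitionFn H := by
  rw [partitionFn_eq_sum hH]
  exact Finset.sum_pos (fun i _ => Real.exp_pos _) Finset.univ_nonempty

lemma gibbsState_eq_cfc (hH : H.IsHermitian) :
    gibbsState H = cfc (fun x => Real.exp x / partitionFn H) H := by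
  simp_rw [div_eq_inv_mul]
  rw [cfc_const_mul _ _ _ (finite_real_spectrum.continuousOn _), gibbsState, matExp,
    matFun_eq_cfc _ hH]

lemma gibbsState_posDef [Nonempty n] (hH : H.IsHermitian) : (gibbsState H).PosDef := by
  rw [gibbsState_eq_cfc hH]
  exact posDef_cfc (fun x => div_pos (Real.exp_pos x) (partitionFn_pos hH)) hH

lemma gibbsState_isDensity [Nonempty n] (hH : H.IsHermitian) : IsDensity (gibbsState H) := by
  refine ⟨(gibbsState_posDef hH).posSemidef, ?_⟩
  rw [gibbsState, trace_smul, matExp, matFun_eq_cfc _ hH, trace_cfc _ hH,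
    ← partitionFn_eq_sum hH, Complex.real_smul, ← Complex.ofReal_mul,
    inv_mul_cancel₀ (partitionFn_pos hH).ne', Complex.ofReal_one]

lemma matLog_gibbsState [Nonempty n] (hH : H.IsHermitian) :
    matLog (gibbsState H) = H - Real.log (partitionFn H) • 1 := by
  have hZ := partitionFn_pos hH
  rw [matLog, matFun_eq_cfc _ (gibbsState_posDef hH).isHermitian, gibbsState_eq_cfc hH,
    ← cfc_comp' _ _ _ ((finite_real_spectrum.image _).continuousOn _)
      (finite_real_spectrum.continuousOn _) hH.isSelfAdjoint]
  have hlog : ∀ x, Real.log (Real.exp x / partitionFn H) = x - Real.log (partitionFn H) :=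
    fun x => by rw [Real.log_div (Real.exp_pos x).ne' hZ.ne', Real.log_exp]
  simp_rw [hlog]
  rw [cfc_sub .., cfc_id' .., cfc_const .., Algebra.algebraMap_eq_smul_one]

end GibbsState

lemma free_energy_eq_qRelEnt_gibbsState [Nonempty n] {Pm σ ρ : Matrix n n ℂ}
    (hPm : Pm.IsHermitian) {β : ℝ} (hβ : β ≠ 0) (hρ : ρ.trace = 1) :
    (Pm * ρ).trace + β * qRelEnt ρ σ =
      β * qRelEnt ρ (gibbsState (matLog σ - (β : ℂ)⁻¹ • Pm)) -
        β * Real.log (partitionFn (matLog σ - (β : ℂ)⁻¹ • Pm)) := by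
  set H := matLog σ - (β : ℂ)⁻¹ • Pm with hHdef
  have hH : H.IsHermitian :=
    (isHermitian_matFun _ σ).sub (hPm.smul (IsSelfAdjoint.inv₀ (Complex.conj_ofReal β)))
  have hlog : matLog σ - matLog (gibbsState H) =
      (β : ℂ)⁻¹ • Pm + Real.log (partitionFn H) • 1 := by
    rw [matLog_gibbsState hH, hHdef]
    abel
  have hdiff := qRelEnt_sub_qRelEnt ρ σ (gibbsState H)
  rw [hlog, Matrix.mul_add, trace_add, Matrix.mul_smul, Matrix.mul_smul, trace_smul, trace_smul,
    Matrix.mul_one, hρ, trace_mul_comm, Complex.real_smul, mul_one, smul_eq_mul] at hdiff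
  have hβ' : (β : ℂ) * (β : ℂ)⁻¹ = 1 := mul_inv_cancel₀ (Complex.ofReal_ne_zero.mpr hβ)
  linear_combination -(β : ℂ) * hdiff - (Pm * ρ).trace * hβ'

theorem stmt4_general (σ Pm : Matrix n n ℂ) (hσ : IsDensity σ)
    (hPm : Pm.PosSemidef)
    (β : ℝ) (hβ : 0 < β) :
    let c : ℂ := -(β : ℂ) * (Real.log ((matExp (matLog σ - (β : ℂ)⁻¹ • Pm)).trace.re) : ℝ)
    IsLeast {x : ℂ | ∃ ρ, IsDensity ρ ∧ x = (Pm * ρ).trace + (β : ℂ) * qRelEnt ρ σ} c ∧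
    c ≤ (Pm * σ).trace := by
  intro c
  have : Nonempty n := by
    by_contra h
    rw [not_nonempty_iff] at h
    simpa [trace] using hσ.2
  set H := matLog σ - (β : ℂ)⁻¹ • Pm
  have hH : H.IsHermitian :=
    (isHermitian_matFun _ σ).sub (hPm.1.smul (IsSelfAdjoint.inv₀ (Complex.conj_ofReal β)))
  have key : ∀ ρ : Matrix n n ℂ, ρ.trace = 1 →
      (Pm * ρ).trace + β * qRelEnt ρ σ = β * qRelEnt ρ (gibbsState H) + c := fun ρ hρ => by
    rw [free_energy_eq_qRelEnt_gibbsState hPm.1 hβ.ne' hρ, sub_eq_add_neg, neg_mul_eq_neg_mul]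
    rfl
  have hleast : IsLeast {x : ℂ | ∃ ρ, IsDensity ρ ∧ x = (Pm * ρ).trace + β * qRelEnt ρ σ} c := by
    refine ⟨⟨gibbsState H, gibbsState_isDensity hH, ?_⟩, ?_⟩
    · rw [key _ (gibbsState_isDensity hH).2, qRelEnt_self, mul_zero, zero_add]
    · rintro _ ⟨ρ, hρ, rfl⟩
      rw [key ρ hρ.2]
      exact le_add_of_nonneg_left (mul_nonneg (Complex.zero_le_real.mpr hβ.le)
        (qRelEnt_nonneg hρ (gibbsState_isDensity hH) (gibbsState_posDef hH)))
  exact ⟨hleast, hleast.2 ⟨σ, hσ, by rw [qRelEnt_self, mul_zero, add_zero]⟩⟩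

/-- The minimum of `Tr(Πρ) + β S(ρ‖σ)` over density matrices equals
`−β log Tr exp(log σ − Π/β)`, and is at most `Tr(Πσ)`. -/
theorem stmt4 (σ Pm : Matrix n n ℂ) (hσ : IsDensity σ) (hσpd : σ.PosDef)
    (hPm : Pm.PosSemidef) (hPm1 : ((1 : Matrix n n ℂ) - Pm).PosSemidef)
    (β : ℝ) (hβ : 0 < β) :
    let c : ℂ := -(β : ℂ) * (Real.log ((matExp (matLog σ - (β : ℂ)⁻¹ • Pm)).trace.re) : ℝ)
    IsLeast {x : ℂ | ∃ ρ, IsDensity ρ ∧ x = (Pm * ρ).trace + (β : ℂ) * qRelEnt ρ σ} c ∧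
    c ≤ (Pm * σ).trace :=
  stmt4_general σ Pm hσ hPm β hβ
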